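/- Let F(z) = z·ln|z|² for z ≠ 0 and F(0) = 0. For all complex z, z̃ with |z| ≤ 1, |z̃| ≤ 1, and z ≠ 0, one has |F(z̃) − F(z)| ≤ |z − z̃|·(6 − ln|z|²). -/

import Mathlib

/-!
Split `F b - F a = (log ‖b‖² - log ‖a‖²) • b - log ‖a‖² • (a - b)` with `‖b‖ ≤ ‖a‖`. The second
term is at most `|log ‖a‖²| ‖a - b‖`, and by `log x ≤ x - 1` the first is at most
`2 (‖a‖ - ‖b‖) ≤ 2 ‖a - b‖`: the logarithmic singularity is damped by the factor `‖b‖`.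
For `‖z‖ ≤ ‖z̃‖` the roles swap, and `|log ‖z̃‖²| ≤ |log ‖z‖²|` inside the unit ball.
-/

open Real

theorem mul_abs_log_sq_sub_log_sq_le {a b : ℝ} (hb : 0 ≤ b) (hba : b ≤ a) :
    b * |log (a ^ 2) - log (b ^ 2)| ≤ 2 * (a - b) := by
  rcases hb.eq_or_lt with rfl | hb
  · simp only [zero_mul]
    linarith
  have ha : 0 < a := hb.trans_le hba
  rw [abs_of_nonneg (sub_nonneg.2 (log_le_log (by positivity) (by gcongr))), log_pow, log_pow,
    ← mul_sub, ← log_div ha.ne' hb.ne']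
  calc b * (2 * log (a / b)) ≤ b * (2 * (a / b - 1)) := by
        gcongr
        exact log_le_sub_one_of_pos (div_pos ha hb)
    _ = 2 * (a - b) := by field_simp

theorem norm_log_sq_norm_smul_sub_le {E : Type*} [SeminormedAddCommGroup E] [NormedSpace ℝ E]
    {a b : E} (hba : ‖b‖ ≤ ‖a‖) :
    ‖log (‖b‖ ^ 2) • b - log (‖a‖ ^ 2) • a‖ ≤ ‖a - b‖ * (2 + |log (‖a‖ ^ 2)|) := by
  set La := log (‖a‖ ^ 2)
  set Lb := log (‖b‖ ^ 2)
  have hsplit : Lb • b - La • a = (Lb - La) • b - La • (a - b) := by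
    simp only [sub_smul, smul_sub]
    abel
  calc ‖Lb • b - La • a‖ ≤ ‖b‖ * |La - Lb| + |La| * ‖a - b‖ := by
        rw [hsplit, abs_sub_comm, mul_comm ‖b‖]
        simpa only [norm_smul, Real.norm_eq_abs] using norm_sub_le ((Lb - La) • b) (La • (a - b))
    _ ≤ 2 * (‖a‖ - ‖b‖) + |La| * ‖a - b‖ :=
        add_le_add_left (mul_abs_log_sq_sub_log_sq_le (norm_nonneg b) hba) _
    _ ≤ 2 * ‖a - b‖ + |La| * ‖a - b‖ := by
        gcongr
        exact norm_sub_norm_le a b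
    _ = ‖a - b‖ * (2 + |La|) := by ring

/-- Almost-Lipschitz estimate for `F z = z ln |z|²`:
for `|z| ≤ 1`, `|z̃| ≤ 1`, `z ≠ 0`, `|F z̃ − F z| ≤ |z − z̃| (6 − ln|z|²)`. -/
theorem stmt_2 (z zt : ℂ) (hz : ‖z‖ ≤ 1) (hzt : ‖zt‖ ≤ 1) (hz0 : z ≠ 0) :
    ‖zt * (Real.log (‖zt‖ ^ 2) : ℂ) -
        z * (Real.log (‖z‖ ^ 2) : ℂ)‖ ≤
      ‖z - zt‖ * (6 - Real.log (‖z‖ ^ 2)) := by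
  rw [mul_comm zt, mul_comm z, ← Complex.real_smul, ← Complex.real_smul]
  have hLz : log (‖z‖ ^ 2) ≤ 0 := log_nonpos (by positivity) (pow_le_one₀ (norm_nonneg z) hz)
  rcases le_total ‖zt‖ ‖z‖ with hle | hle
  · calc _ ≤ ‖z - zt‖ * (2 + |log (‖z‖ ^ 2)|) := norm_log_sq_norm_smul_sub_le hle
      _ ≤ ‖z - zt‖ * (6 - log (‖z‖ ^ 2)) := by
        rw [abs_of_nonpos hLz]
        gcongr
        norm_num
  · have hLzt : log (‖zt‖ ^ 2) ≤ 0 := log_nonpos (by positivity) (pow_le_one₀ (norm_nonneg zt) hzt)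
    have hmono : log (‖z‖ ^ 2) ≤ log (‖zt‖ ^ 2) :=
      log_le_log (by positivity [norm_pos_iff.2 hz0]) (by gcongr)
    rw [← norm_neg, neg_sub, norm_sub_rev z zt]
    calc _ ≤ ‖zt - z‖ * (2 + |log (‖zt‖ ^ 2)|) := norm_log_sq_norm_smul_sub_le hle
      _ ≤ ‖zt - z‖ * (6 - log (‖z‖ ^ 2)) := by
        rw [abs_of_nonpos hLzt]
        gcongr
        linarith
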